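/- Let a group Γ act on a set X and be generated by a subset S. Let A : X → X be a map such that: (i) for every x ∈ X there exists γ ∈ Γ with A(x) = γ · x; and (ii) for every g ∈ S and every x ∈ X, at least one of the following holds: A(x) = g · x, or A(g · x) = x, or A(g · x) = A(x). Then for every x ∈ X, the grand orbit of x under A equals the Γ-orbit of x. -/
import Mathlib

/-- The grand orbit of `x` under `A`: all `x'` with `A^[m] x = A^[n] x'` for some `m, n`. -/
def grandOrbit {X : Type*} (A : X → X) (x : X) : Set X :=
  {x' | ∃ m n : ℕ, A^[m] x = A^[n] x'}

theorem grandOrbit_symm {X : Type*} {A : X → X} {x y : X}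
    (h : y ∈ grandOrbit A x) : x ∈ grandOrbit A y := by
  obtain ⟨m, n, h⟩ := h; exact ⟨n, m, h.symm⟩

theorem grandOrbit_trans {X : Type*} {A : X → X} {x y z : X}
    (h1 : y ∈ grandOrbit A x) (h2 : z ∈ grandOrbit A y) : z ∈ grandOrbit A x := by
  obtain ⟨m, n, h1⟩ := h1
  obtain ⟨p, q, h2⟩ := h2
  refine ⟨p + m, n + q, ?_⟩
  calc A^[p + m] x = A^[p] (A^[m] x) := Function.iterate_add_apply A p m x
    _ = A^[p] (A^[n] y) := by rw [h1]
    _ = A^[n] (A^[p] y) := by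
        rw [← Function.iterate_add_apply, ← Function.iterate_add_apply, Nat.add_comm]
    _ = A^[n] (A^[q] z) := by rw [h2]
    _ = A^[n + q] z := (Function.iterate_add_apply A n q z).symm

/-- Higher Bowen–Series orbit equivalence criterion: if `A` moves every point by a group
element, and for each generator `g` and point `x` one of `A x = g • x`, `A (g • x) = x`, or
`A (g • x) = A x` holds, then grand orbits of `A` coincide with `Γ`-orbits. -/
theorem stmt7 {Γ : Type*} [Group Γ] {X : Type*} [MulAction Γ X]
    (S : Set Γ) (hS : Subgroup.closure S = ⊤)
    (A : X → X)
    (h1 : ∀ x : X, ∃ γ : Γ, A x = γ • x)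
    (h2 : ∀ g ∈ S, ∀ x : X,
      A x = g • x ∨ A (g • x) = x ∨ A (g • x) = A x) :
    ∀ x : X, grandOrbit A x = MulAction.orbit Γ x := by
  have hiter : ∀ (k : ℕ) (x : X), ∃ γ : Γ, A^[k] x = γ • x := by
    intro k
    induction k with
    | zero => exact fun x => ⟨1, by simp⟩
    | succ k ih =>
      intro x
      obtain ⟨γ, hγ⟩ := ih x
      obtain ⟨δ, hδ⟩ := h1 (γ • x)
      exact ⟨δ * γ, by rw [Function.iterate_succ_apply', hγ, hδ, mul_smul]⟩
  intro x
  apply Set.eq_of_subset_of_subset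
  · rintro x' ⟨m, n, h⟩
    obtain ⟨γ, hγ⟩ := hiter m x
    obtain ⟨δ, hδ⟩ := hiter n x'
    refine ⟨δ⁻¹ * γ, ?_⟩
    show (δ⁻¹ * γ) • x = x'
    rw [mul_smul, ← hγ, h, hδ, inv_smul_smul]
  · rintro _ ⟨γ, rfl⟩
    have key : ∀ γ : Γ, ∀ x : X, γ • x ∈ grandOrbit A x := by
      have hmem : ∀ γ ∈ Subgroup.closure S, ∀ x : X, γ • x ∈ grandOrbit A x := by
        intro γ hγ
        induction hγ using Subgroup.closure_induction with
        | mem g hg =>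
          intro x
          rcases h2 g hg x with h | h | h
          · exact ⟨1, 0, by simpa using h⟩
          · exact ⟨0, 1, by simpa using h.symm⟩
          · exact ⟨1, 1, by simpa using h.symm⟩
        | one => intro x; exact ⟨0, 0, by simp⟩
        | mul a b _ _ ha hb =>
          intro x
          have := hb x
          have := ha (b • x)
          rw [mul_smul]
          exact grandOrbit_trans (hb x) (ha (b • x))
        | inv a _ ha =>
          intro x
          have := ha (a⁻¹ • x)
          rw [smul_inv_smul] at this
          exact grandOrbit_symm this
      intro γ
      exact hmem γ (by rw [hS]; trivial)
    exact key γ x
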